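/- For integers p ≥ 2, n ≥ 0 and 0 ≤ k ≤ p, define Λ(n,k) = Z(n+p+1,k) − Z(n,k), where Z(n,k) = Σ_{j=k}^{p-1} M_j(n) and M_j(n) is the number of integers s with ⌈(ℓ(n)−j)/(p+1)⌉ ≤ s ≤ ⌊(n+p·ℓ(n)−1−j(p+1))/(p(p+1))⌋, with ℓ(n) ∈ [0,p] the residue of n modulo p+1. Then Λ(n,k) = 0 if n ≡ s mod p for some s ∈ [0,k−1], and Λ(n,k) = 1 if n ≡ s mod p for some s ∈ [k,p−1]. In particular, Λ(n,k) is periodic in n with period p. -/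

import Mathlib

/-- `ℓ(n)`: the residue of `n` modulo `p+1`. -/
def ellFun (p n : ℤ) : ℤ := n % (p + 1)

/-- `M_j(n)`: the number of integers `s` with
`⌈(ℓ(n)−j)/(p+1)⌉ ≤ s ≤ ⌊(n+p·ℓ(n)−1−j(p+1))/(p(p+1))⌋` (0 if the range is empty). -/
def Mfun (p n j : ℤ) : ℤ :=
  max 0 (Int.fdiv (n + p * ellFun p n - 1 - j * (p + 1)) (p * (p + 1))
          - Int.fdiv (ellFun p n - j + p) (p + 1) + 1)

/-- `Z(n,k) = Σ_{j=k}^{p-1} M_j(n)` (so `Z(n,p) = 0`). -/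
noncomputable def Zfun (p n k : ℤ) : ℤ := ∑ j ∈ Finset.Ico k p, Mfun p n j

/-- `Λ(n,k) = Z(n+p+1,k) − Z(n,k)`. -/
noncomputable def LambdaFun (p n k : ℤ) : ℤ := Zfun p (n + p + 1) k - Zfun p n k

lemma ediv_helper {d : ℤ} (a r : ℤ) (hd : 0 < d) (h0 : 0 ≤ r) (h1 : r < d) :
    (d * a + r) / d = a := by
  rw [add_comm, Int.add_mul_ediv_left r a (ne_of_gt hd), Int.ediv_eq_zero_of_lt h0 h1, zero_add]

lemma Mdiff (p n j : ℤ) (hp : 2 ≤ p) (hn : 0 ≤ n) (hj0 : 0 ≤ j) (hjp : j < p) :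
    Mfun p (n + p + 1) j - Mfun p n j = if (n - j) % p = 0 then 1 else 0 := by
  have hp1 : (0:ℤ) < p + 1 := by omega
  have hpp1 : (0:ℤ) < p * (p + 1) := by positivity
  set ℓ : ℤ := n % (p + 1) with hℓdef
  set q : ℤ := n / (p + 1) with hqdef
  have hℓ0 : 0 ≤ ℓ := Int.emod_nonneg n (by omega)
  have hℓp : ℓ < p + 1 := Int.emod_lt_of_pos n hp1
  have hq0 : 0 ≤ q := Int.ediv_nonneg hn (le_of_lt hp1)
  have hqn : (p + 1) * q + ℓ = n := Int.mul_ediv_add_emod n (p + 1)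
  set m : ℤ := q + ℓ - j with hmdef
  set a : ℤ := m / p with hadef
  set r : ℤ := m % p with hrdef
  have hr0 : 0 ≤ r := Int.emod_nonneg m (by omega)
  have hrp : r < p := Int.emod_lt_of_pos m (by omega)
  have hma : p * a + r = m := Int.mul_ediv_add_emod m p
  -- ℓ(n+p+1) = ℓ
  have hell' : ellFun p (n + p + 1) = ℓ := by
    show (n + p + 1) % (p + 1) = ℓ
    have : n + p + 1 = n + (p + 1) * 1 := by ring
    rw [this, Int.add_mul_emod_self_left]
  have hell : ellFun p n = ℓ := rfl
  -- lower bound value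
  have hL : Int.fdiv (ℓ - j + p) (p + 1) = if j < ℓ then 1 else 0 := by
    rw [Int.fdiv_eq_ediv_of_nonneg _ (le_of_lt hp1)]
    split_ifs with h
    · have e : ℓ - j + p = (p + 1) * 1 + (ℓ - j - 1) := by ring
      rw [e, ediv_helper _ _ hp1 (by omega) (by omega)]
    · exact Int.ediv_eq_zero_of_lt (by omega) (by omega)
  -- upper bound values
  have hnum : n + p * ℓ - 1 - j * (p + 1) = p * (p + 1) * a + ((p + 1) * r - 1) := by
    linear_combination -hqn - (p + 1) * hma
  have hnum' : n + p + 1 + p * ℓ - 1 - j * (p + 1)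
      = p * (p + 1) * a + ((p + 1) * (r + 1) - 1) := by
    linear_combination -hqn - (p + 1) * hma
  have hU' : Int.fdiv (n + p + 1 + p * ℓ - 1 - j * (p + 1)) (p * (p + 1)) = a := by
    rw [Int.fdiv_eq_ediv_of_nonneg _ (le_of_lt hpp1), hnum']
    exact ediv_helper _ _ hpp1 (by nlinarith) (by nlinarith)
  have hU : Int.fdiv (n + p * ℓ - 1 - j * (p + 1)) (p * (p + 1))
      = if r = 0 then a - 1 else a := by
    rw [Int.fdiv_eq_ediv_of_nonneg _ (le_of_lt hpp1), hnum]
    split_ifs with h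
    · have e : p * (p + 1) * a + ((p + 1) * r - 1)
          = p * (p + 1) * (a - 1) + (p * (p + 1) - 1) := by rw [h]; ring
      rw [e]; exact ediv_helper _ _ hpp1 (by nlinarith) (by omega)
    · have hr1 : 1 ≤ r := by omega
      exact ediv_helper _ _ hpp1 (by nlinarith) (by nlinarith)
  -- the mod-p condition
  have hcond : (n - j) % p = r := by
    have e : n - j = r + p * (q + a) := by linear_combination -hqn - hma
    rw [e, Int.add_mul_emod_self_left, Int.emod_eq_of_lt hr0 hrp]
  unfold Mfun
  rw [hell', hell, hU', hU, hL, hcond]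
  by_cases hr : r = 0
  · -- p ∣ m; here m = p*a, and we show a ≥ L
    rw [if_pos hr, if_pos hr]
    have hm : p * a = m := by omega
    by_cases hjl : j < ℓ
    · rw [if_pos hjl]
      have hm1 : 1 ≤ m := by omega
      have ha1 : 1 ≤ a := by
        by_contra hcon
        push_neg at hcon
        have h1 : a ≤ 0 := by omega
        have h2 : p * a ≤ p * 0 :=
          mul_le_mul_of_nonneg_left h1 (by omega)
        linarith
      rw [max_eq_right (by omega), max_eq_right (by omega)]; ring
    · rw [if_neg hjl]
      have hm1 : -p < m := by omega
      have ha1 : 0 ≤ a := by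
        by_contra hcon
        push_neg at hcon
        have h1 : a ≤ -1 := by omega
        have h2 : p * a ≤ p * (-1) :=
          mul_le_mul_of_nonneg_left h1 (by omega)
        linarith
      rw [max_eq_right (by omega), max_eq_right (by omega)]; ring
  · rw [if_neg hr, if_neg hr]; ring

lemma lambda_val (p n k : ℤ) (hp : 2 ≤ p) (hn : 0 ≤ n)
    (hk0 : 0 ≤ k) (hkp : k ≤ p) :
    LambdaFun p n k = if k ≤ n % p then 1 else 0 := by
  have hp0 : (0:ℤ) < p := by omega
  have hs0 : 0 ≤ n % p := Int.emod_nonneg n (by omega)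
  have hsp : n % p < p := Int.emod_lt_of_pos n hp0
  unfold LambdaFun Zfun
  rw [← Finset.sum_sub_distrib]
  have hterm : ∀ j ∈ Finset.Ico k p,
      Mfun p (n + p + 1) j - Mfun p n j = if j = n % p then 1 else 0 := by
    intro j hj
    rw [Finset.mem_Ico] at hj
    rw [Mdiff p n j hp hn (by omega) hj.2]
    have hjj : j % p = j := Int.emod_eq_of_lt (by omega) hj.2
    have hiff : ((n - j) % p = 0) ↔ (j = n % p) := by
      rw [← Int.emod_eq_emod_iff_emod_sub_eq_zero, hjj, eq_comm]
    simp only [hiff]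
  rw [Finset.sum_congr rfl hterm, Finset.sum_ite_eq']
  simp only [Finset.mem_Ico]
  by_cases h : k ≤ n % p
  · rw [if_pos ⟨h, hsp⟩, if_pos h]
  · rw [if_neg (by omega), if_neg h]

/-- `Λ(n,k) = 0` if `n ≡ s mod p` for some `s ∈ [0,k−1]`, and `Λ(n,k) = 1` if
`n ≡ s mod p` for some `s ∈ [k,p−1]`; in particular, `Λ(·,k)` is `p`-periodic. -/
theorem lambda_description (p n k : ℤ) (hp : 2 ≤ p) (hn : 0 ≤ n)
    (hk0 : 0 ≤ k) (hkp : k ≤ p) :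
    (∀ s : ℤ, 0 ≤ s → s ≤ k - 1 → n % p = s → LambdaFun p n k = 0) ∧
    (∀ s : ℤ, k ≤ s → s ≤ p - 1 → n % p = s → LambdaFun p n k = 1) ∧
    LambdaFun p (n + p) k = LambdaFun p n k := by
  refine ⟨?_, ?_, ?_⟩
  · intro s h0 h1 hs
    rw [lambda_val p n k hp hn hk0 hkp, if_neg (by omega)]
  · intro s h1 h2 hs
    rw [lambda_val p n k hp hn hk0 hkp, if_pos (by omega)]
  · rw [lambda_val p (n + p) k hp (by omega) hk0 hkp,
      lambda_val p n k hp hn hk0 hkp]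
    have h : (n + p) % p = n % p := by
      have := Int.add_mul_emod_self_left (a := n) (b := p) (c := 1)
      simpa using this
    rw [h]
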